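/- arXiv:2209.02589 — 4 statements merged into one kernel-verified Lean document; each statement's English description precedes it below -/
import Mathlib

section
/- min over η ∈ [0,1] of max(1/(1+η), (1/2 + η + η²/2)/(1+η)) equals 1/√2, with the minimum attained at η = √2 - 1. -/
/-! The rounding energy is `(1 + η)² / 2`, so with `t = 1 + η` the ratio is `max (1 / t) (t / 2)`:
one branch decreases and the other increases in `t`, and they cross at `t = √2`, where both equal
`1 / √2`. -/

open Real

lemma rounding_energy_div (η : ℝ) (hη : 1 + η ≠ 0) :
    (1 / 2 + η + η ^ 2 / 2) / (1 + η) = (1 + η) / 2 := by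
  field_simp
  ring

lemma one_div_sqrt_two_le_max {t : ℝ} (ht : 0 < t) : 1 / √2 ≤ max (1 / t) (t / 2) := by
  rcases le_or_gt t √2 with h | h
  · exact le_max_of_le_left (one_div_le_one_div_of_le ht h)
  · refine le_max_of_le_right ?_
    rw [← sqrt_div_self']
    linarith

lemma max_one_div_sqrt_two : max (1 / √2) (√2 / 2) = 1 / √2 := by
  rw [sqrt_div_self', max_self]

theorem epr_ratio_min :
    IsLeast {r : ℝ | ∃ η ∈ Set.Icc (0:ℝ) 1,
        r = max (1 / (1 + η)) ((1 / 2 + η + η ^ 2 / 2) / (1 + η))} (1 / Real.sqrt 2) ∧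
      max (1 / (1 + (Real.sqrt 2 - 1)))
        ((1 / 2 + (Real.sqrt 2 - 1) + (Real.sqrt 2 - 1) ^ 2 / 2) / (1 + (Real.sqrt 2 - 1)))
        = 1 / Real.sqrt 2 := by
  have hval : max (1 / (1 + (√2 - 1)))
      ((1 / 2 + (√2 - 1) + (√2 - 1) ^ 2 / 2) / (1 + (√2 - 1))) = 1 / √2 := by
    rw [rounding_energy_div _ (by simp), add_sub_cancel, max_one_div_sqrt_two]
  have hsqrt_le_two : √2 ≤ 2 := by
    nlinarith [sq_sqrt (zero_le_two : (0 : ℝ) ≤ 2), one_lt_sqrt_two]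
  refine ⟨⟨⟨√2 - 1, ⟨by linarith [one_lt_sqrt_two], by linarith⟩, hval.symm⟩, ?_⟩, hval⟩
  rintro r ⟨η, ⟨hη0, -⟩, rfl⟩
  rw [rounding_energy_div η (by positivity)]
  exact one_div_sqrt_two_le_max (by positivity)
end

section
/- For all η ∈ [0,1], max(1, 1/2 + η + η²/2) ≥ (1+η)/√2. -/
theorem le_max_one_sq (t : ℝ) : t ≤ max 1 (t ^ 2) := by
  rcases le_total t 1 with ht | ht
  · exact ht.trans (le_max_left _ _)
  · exact (le_self_pow₀ ht two_ne_zero).trans (le_max_right _ _)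

theorem epr_key_inequality_general (η : ℝ) :
    max 1 (1 / 2 + η + η ^ 2 / 2) ≥ (1 + η) / Real.sqrt 2 := by
  have hsq : 1 / 2 + η + η ^ 2 / 2 = ((1 + η) / Real.sqrt 2) ^ 2 := by
    rw [div_pow, Real.sq_sqrt zero_le_two]
    ring
  rw [hsq]
  exact le_max_one_sq _

theorem epr_key_inequality (η : ℝ) (hη : η ∈ Set.Icc (0:ℝ) 1) :
    max 1 (1 / 2 + η + η ^ 2 / 2) ≥ (1 + η) / Real.sqrt 2 :=
  epr_key_inequality_general η
end

section
/- Let g = (1/2)(I⊗I + X⊗X - Y⊗Y + Z⊗Z) and P = (X-Y)/√2. For θ ∈ ℝ, let ρ = exp(iθ P⊗P)|00⟩⟨00|exp(-iθ P⊗P). Then Tr(g·ρ) = 1 + sin(2θ). -/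
open Matrix Kronecker

noncomputable section

def PX : Matrix (Fin 2) (Fin 2) ℂ := !![0, 1; 1, 0]
def PY : Matrix (Fin 2) (Fin 2) ℂ := !![0, -Complex.I; Complex.I, 0]
def PZ : Matrix (Fin 2) (Fin 2) ℂ := !![1, 0; 0, -1]

/-- The EPR edge Hamiltonian term `g = (1/2)(I⊗I + X⊗X - Y⊗Y + Z⊗Z)`. -/
def gEPR : Matrix (Fin 2 × Fin 2) (Fin 2 × Fin 2) ℂ :=
  (2 : ℂ)⁻¹ • (1 + PX ⊗ₖ PX - PY ⊗ₖ PY + PZ ⊗ₖ PZ)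

def Pmat : Matrix (Fin 2) (Fin 2) ℂ := ((Real.sqrt 2 : ℂ))⁻¹ • (PX - PY)

def e0 : Fin 2 → ℂ := ![1, 0]

def tensorVec (v w : Fin 2 → ℂ) : Fin 2 × Fin 2 → ℂ := fun p => v p.1 * w p.2

lemma exp_I_smul {n : Type*} [Fintype n] [DecidableEq n] (A : Matrix n n ℂ)
    (h : A * A = 1) (θ : ℝ) :
    NormedSpace.exp ((Complex.I * (θ : ℂ)) • A) =
      (Real.cos θ : ℂ) • (1 : Matrix n n ℂ) + (Complex.I * (Real.sin θ : ℂ)) • A := by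
  have h2 : (Complex.I * (θ : ℂ)) ^ 2 = -(θ:ℂ)^2 := by
    rw [mul_pow, Complex.I_sq]; ring
  have hA2 : A ^ 2 = 1 := by rw [sq, h]
  rw [NormedSpace.exp_eq_tsum (𝕂 := ℂ)]
  refine HasSum.tsum_eq ?_
  rw [Complex.ofReal_cos, Complex.ofReal_sin]
  refine HasSum.even_add_odd ?_ ?_
  · have := (Complex.hasSum_cos (θ:ℂ)).smul_const (1 : Matrix n n ℂ)
    convert this using 2 with k
    · rfl
    rw [smul_pow, pow_mul, pow_mul, hA2, one_pow, smul_smul, h2]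
    congr 1
    rw [neg_pow, div_eq_mul_inv]
    ring
  · have := ((Complex.hasSum_sin (θ:ℂ)).mul_left Complex.I).smul_const A
    convert this using 2 with k
    · rfl
    rw [smul_pow, pow_succ, pow_succ, pow_mul, pow_mul, hA2, one_pow, one_mul, smul_smul,
      h2, neg_pow]
    congr 1
    rw [div_eq_mul_inv]
    ring

lemma sqrt2_mul : ((Real.sqrt 2 : ℝ) : ℂ) * ((Real.sqrt 2 : ℝ) : ℂ) = 2 := by
  rw [← Complex.ofReal_mul, Real.mul_self_sqrt (by norm_num)]
  norm_num

lemma Pmat_sq : Pmat * Pmat = 1 := by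
  rw [Pmat, smul_mul_smul_comm]
  have h : (PX - PY) * (PX - PY) = (2:ℂ) • 1 := by
    ext i j
    fin_cases i <;> fin_cases j <;>
      simp [PX, PY, Matrix.mul_apply, Fin.sum_univ_two, Matrix.one_apply] <;> ring_nf <;>
      simp [Complex.I_sq] <;> ring
  rw [h, smul_smul]
  have : ((Real.sqrt 2 : ℝ):ℂ)⁻¹ * ((Real.sqrt 2 : ℝ):ℂ)⁻¹ * 2 = 1 := by
    field_simp
    rw [sq]; exact sqrt2_mul.symm
  rw [this, one_smul]

lemma kron_sq : (Pmat ⊗ₖ Pmat) * (Pmat ⊗ₖ Pmat) = 1 := by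
  rw [← Matrix.mul_kronecker_mul, Pmat_sq, Matrix.one_kronecker_one]

lemma kron_eq : Pmat ⊗ₖ Pmat = (2:ℂ)⁻¹ • ((PX - PY) ⊗ₖ (PX - PY)) := by
  rw [Pmat, Matrix.smul_kronecker, Matrix.kronecker_smul, smul_smul, ← mul_inv, sqrt2_mul]

theorem epr_rotation_energy (θ : ℝ) :
    let v00 := tensorVec e0 e0
    let ρ := NormedSpace.exp ((Complex.I * (θ : ℂ)) • (Pmat ⊗ₖ Pmat)) *
        Matrix.vecMulVec v00 (star v00) *
        NormedSpace.exp (-((Complex.I * (θ : ℂ)) • (Pmat ⊗ₖ Pmat)))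
    (gEPR * ρ).trace = 1 + (Real.sin (2 * θ) : ℂ) := by
  intro v00 ρ
  have hneg : -((Complex.I * (θ : ℂ)) • (Pmat ⊗ₖ Pmat)) =
      (Complex.I * ((-θ : ℝ) : ℂ)) • (Pmat ⊗ₖ Pmat) := by
    rw [← neg_smul]; congr 1; push_cast; ring
  have hρ : ρ = ((Real.cos θ : ℂ) • (1 : Matrix (Fin 2 × Fin 2) (Fin 2 × Fin 2) ℂ) +
        (Complex.I * (Real.sin θ : ℂ)) • (Pmat ⊗ₖ Pmat)) *
      Matrix.vecMulVec v00 (star v00) *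
      ((Real.cos θ : ℂ) • 1 - (Complex.I * (Real.sin θ : ℂ)) • (Pmat ⊗ₖ Pmat)) := by
    show NormedSpace.exp _ * _ * NormedSpace.exp _ = _
    rw [hneg, exp_I_smul _ kron_sq, exp_I_smul _ kron_sq, Real.cos_neg, Real.sin_neg]
    push_cast
    rw [mul_neg, neg_smul, ← sub_eq_add_neg]
  rw [hρ, kron_eq]
  have hsc : (Real.sin θ : ℂ)^2 + (Real.cos θ : ℂ)^2 = 1 := by
    push_cast [← Complex.ofReal_pow, ← Complex.ofReal_add]
    exact_mod_cast Real.sin_sq_add_cos_sq θ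
  have h2θ : (Real.sin (2*θ) : ℂ) = 2 * (Real.sin θ : ℂ) * (Real.cos θ : ℂ) := by
    rw [Real.sin_two_mul]; push_cast; ring
  rw [h2θ]
  simp only [Matrix.trace, Matrix.diag]
  simp only [gEPR, PX, PY, PZ, v00, tensorVec, e0,
    Matrix.mul_apply, Matrix.vecMulVec_apply, Matrix.kroneckerMap_apply,
    Matrix.smul_apply, Matrix.add_apply, Matrix.sub_apply, Matrix.one_apply,
    Fintype.sum_prod_type, Fin.sum_univ_two, Pi.star_apply]
  norm_num [Prod.ext_iff, Fin.ext_iff]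
  ring_nf
  linear_combination (Complex.sin_sq_add_cos_sq (θ:ℂ)) +
    (-2*Complex.cos (θ:ℂ)*Complex.sin (θ:ℂ) -
      (Complex.sin (θ:ℂ)^2/4)*(Complex.I^4 - 3*Complex.I^2 + 4)) * Complex.I_sq
end
end

section
/- Let θ : E → ℝ be rotation angles on the edges of a finite graph around distinguished adjacent vertices i, j. Suppose for every edge e ≠ (i,j) incident to i or j, sin(2θ_e) = y_e ∈ [0,1] and the values y_e at each of i and j sum to at most 1 - y with y = sin(2θ_{ij}) ∈ [0,1]. Then 1/2 + (1/2)·∏_{k∼i, k≠j} cos(2θ_{ik})·∏_{l∼j, l≠i} cos(2θ_{lj}) + (1/2)·sin(2θ_{ij})·(∏_{k∼i, k≠j} cos(2θ_{ik}) + ∏_{l∼j, l≠i} cos(2θ_{lj})) ≥ 1/2 + y + y²/2, assuming all θ_e ∈ [0, π/4] so the cosines are nonnegative. -/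
open Finset Real

/-! Since `cos (2θ)² = 1 - sin (2θ)²`, the product of the cosines is controlled by the
sum of the sines through `1 - (∑ a)² ≤ ∏ (1 - a²)`; feeding in the monogamy bound
`∑ sin ≤ 1 - y` gives `(∏ cos)² ≥ 1 - (1 - y)² = 2y - y²` at each endpoint of the edge,
and `2y - y² ≥ y²` for `y ≤ 1` turns this into the claimed quadratic lower bound. -/

lemma one_sub_sq_sum_le_prod_one_sub_sq {ι : Type*} (s : Finset ι) (f : ι → ℝ)
    (hf : ∀ k ∈ s, f k ∈ Set.Icc (0:ℝ) 1) :
    1 - (∑ k ∈ s, f k) ^ 2 ≤ ∏ k ∈ s, (1 - f k ^ 2) := by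
  induction s using Finset.cons_induction with
  | empty => simp
  | cons a s ha ih =>
    rw [prod_cons, sum_cons]
    obtain ⟨ha0, ha1⟩ := hf a (mem_cons_self a s)
    have hS : 0 ≤ ∑ k ∈ s, f k := sum_nonneg fun k hk => (hf k (mem_cons_of_mem hk)).1
    calc 1 - (f a + ∑ k ∈ s, f k) ^ 2
        ≤ (1 - f a ^ 2) * (1 - (∑ k ∈ s, f k) ^ 2) := by nlinarith [mul_nonneg ha0 hS]
      _ ≤ (1 - f a ^ 2) * ∏ k ∈ s, (1 - f k ^ 2) :=
        mul_le_mul_of_nonneg_left (ih fun k hk => hf k (mem_cons_of_mem hk)) (by nlinarith)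

lemma sq_prod_cos_ge_of_sum_sin_le {ι : Type*} (s : Finset ι) (α : ι → ℝ)
    (hsin : ∀ k ∈ s, sin (α k) ∈ Set.Icc (0:ℝ) 1) {y : ℝ}
    (hsum : ∑ k ∈ s, sin (α k) ≤ 1 - y) :
    2 * y - y ^ 2 ≤ (∏ k ∈ s, cos (α k)) ^ 2 := by
  have hsum0 : 0 ≤ ∑ k ∈ s, sin (α k) := sum_nonneg fun k hk => (hsin k hk).1
  calc 2 * y - y ^ 2 = 1 - (1 - y) ^ 2 := by ring
    _ ≤ 1 - (∑ k ∈ s, sin (α k)) ^ 2 := by gcongr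
    _ ≤ ∏ k ∈ s, (1 - sin (α k) ^ 2) := one_sub_sq_sum_le_prod_one_sub_sq s _ hsin
    _ = (∏ k ∈ s, cos (α k)) ^ 2 := by simp only [← prod_pow, cos_sq']

lemma cos_two_mul_nonneg {θ : ℝ} (hθ : θ ∈ Set.Icc (0:ℝ) (π / 4)) : 0 ≤ cos (2 * θ) :=
  cos_nonneg_of_mem_Icc ⟨by linarith [pi_pos, hθ.1], by linarith [hθ.2]⟩

lemma add_add_sq_div_two_le {y P Q : ℝ} (hy0 : 0 ≤ y) (hy1 : y ≤ 1) (hP : 0 ≤ P) (hQ : 0 ≤ Q)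
    (hPsq : 2 * y - y ^ 2 ≤ P ^ 2) (hQsq : 2 * y - y ^ 2 ≤ Q ^ 2) :
    1 / 2 + y + y ^ 2 / 2 ≤ 1 / 2 + 1 / 2 * P * Q + 1 / 2 * y * (P + Q) := by
  have hm : 0 ≤ 2 * y - y ^ 2 := by nlinarith
  have hyP : y ≤ P := pow_le_pow_iff_left₀ hy0 hP two_ne_zero |>.1 (by nlinarith)
  have hyQ : y ≤ Q := pow_le_pow_iff_left₀ hy0 hQ two_ne_zero |>.1 (by nlinarith)
  have hPQ : 2 * y - y ^ 2 ≤ P * Q :=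
    pow_le_pow_iff_left₀ hm (mul_nonneg hP hQ) two_ne_zero |>.1
      (by nlinarith [mul_le_mul hPsq hQsq hm (sq_nonneg P)])
  nlinarith

theorem epr_edge_energy_bound_general {ιK ιL : Type*} (K : Finset ιK) (L : Finset ιL)
    (θi : ιK → ℝ) (θj : ιL → ℝ) (θij : ℝ)
    (hθi : ∀ k ∈ K, θi k ∈ Set.Icc (0:ℝ) (Real.pi / 4))
    (hθj : ∀ l ∈ L, θj l ∈ Set.Icc (0:ℝ) (Real.pi / 4))
    (y : ℝ) (hy : y = Real.sin (2 * θij)) (hy01 : y ∈ Set.Icc (0:ℝ) 1)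
    (hyK : ∀ k ∈ K, Real.sin (2 * θi k) ∈ Set.Icc (0:ℝ) 1)
    (hyL : ∀ l ∈ L, Real.sin (2 * θj l) ∈ Set.Icc (0:ℝ) 1)
    (hsumK : ∑ k ∈ K, Real.sin (2 * θi k) ≤ 1 - y)
    (hsumL : ∑ l ∈ L, Real.sin (2 * θj l) ≤ 1 - y) :
    1 / 2 + (1 / 2) * (∏ k ∈ K, Real.cos (2 * θi k)) * (∏ l ∈ L, Real.cos (2 * θj l)) +
        (1 / 2) * Real.sin (2 * θij) *
          ((∏ k ∈ K, Real.cos (2 * θi k)) + (∏ l ∈ L, Real.cos (2 * θj l)))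
      ≥ 1 / 2 + y + y ^ 2 / 2 := by
  subst hy
  exact add_add_sq_div_two_le hy01.1 hy01.2
    (prod_nonneg fun k hk => cos_two_mul_nonneg (hθi k hk))
    (prod_nonneg fun l hl => cos_two_mul_nonneg (hθj l hl))
    (sq_prod_cos_ge_of_sum_sin_le K _ hyK hsumK)
    (sq_prod_cos_ge_of_sum_sin_le L _ hyL hsumL)

theorem epr_edge_energy_bound {ιK ιL : Type*} (K : Finset ιK) (L : Finset ιL)
    (θi : ιK → ℝ) (θj : ιL → ℝ) (θij : ℝ)
    (hθi : ∀ k ∈ K, θi k ∈ Set.Icc (0:ℝ) (Real.pi / 4))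
    (hθj : ∀ l ∈ L, θj l ∈ Set.Icc (0:ℝ) (Real.pi / 4))
    (hθij : θij ∈ Set.Icc (0:ℝ) (Real.pi / 4))
    (y : ℝ) (hy : y = Real.sin (2 * θij)) (hy01 : y ∈ Set.Icc (0:ℝ) 1)
    (hyK : ∀ k ∈ K, Real.sin (2 * θi k) ∈ Set.Icc (0:ℝ) 1)
    (hyL : ∀ l ∈ L, Real.sin (2 * θj l) ∈ Set.Icc (0:ℝ) 1)
    (hsumK : ∑ k ∈ K, Real.sin (2 * θi k) ≤ 1 - y)
    (hsumL : ∑ l ∈ L, Real.sin (2 * θj l) ≤ 1 - y) :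
    1 / 2 + (1 / 2) * (∏ k ∈ K, Real.cos (2 * θi k)) * (∏ l ∈ L, Real.cos (2 * θj l)) +
        (1 / 2) * Real.sin (2 * θij) *
          ((∏ k ∈ K, Real.cos (2 * θi k)) + (∏ l ∈ L, Real.cos (2 * θj l)))
      ≥ 1 / 2 + y + y ^ 2 / 2 :=
  epr_edge_energy_bound_general K L θi θj θij hθi hθj y hy hy01 hyK hyL hsumK hsumL
end
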